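/- arXiv:2303.17257 — 2 statements merged into one kernel-verified Lean document; each statement's English description precedes it below -/
import Mathlib

section
/- Given a D-poset X and elements x ≤ y, the map z ↦ z ⊖ x is an order isomorphism from the interval [x, y] := {z : x ≤ z ≤ y} to the interval [⊥, y ⊖ x], with inverse given by w ↦ ⊤ ⊖ ((⊤ ⊖ x) ⊖ w). -/
/-!
Write `a ⊕ w := ⊤ ⊖ ((⊤ ⊖ a) ⊖ w)` for `w ≤ ⊤ ⊖ a`. Complementation `a ↦ ⊤ ⊖ a` is an antitone
involution and, for `a ≤ b`, `b ⊖ a = (⊤ ⊖ a) ⊖ (⊤ ⊖ b)`. Since `c ↦ m ⊖ c` is an antitone involution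
of `[⊥, m]`, this identity shows that `z ↦ z ⊖ x` both preserves and reflects the order on `[x, ⊤]`,
and that `x ⊕ ·` and `· ⊖ x` are mutually inverse between `[x, ⊤]` and `[⊥, ⊤ ⊖ x]`.
Restricting to `z ≤ y` cuts the range down to `[⊥, y ⊖ x]`.
-/

/-- A D-poset: a poset with top element and a partial difference operation,
here modeled as a total function `sub` whose axioms are guarded by the
definedness condition (`sub y x` is the difference `y ⊖ x`, meaningful when `x ≤ y`). -/
structure DPoset (X : Type*) [PartialOrder X] where
  top : X
  le_top : ∀ x : X, x ≤ top
  sub : X → X → X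
  sub_le : ∀ {x y : X}, x ≤ y → sub y x ≤ y
  sub_sub_cancel : ∀ {x y : X}, x ≤ y → sub y (sub y x) = x
  sub_antitone : ∀ {x y z : X}, z ≤ y → y ≤ x → sub x y ≤ sub x z
  sub_sub_eq : ∀ {x y z : X}, z ≤ y → y ≤ x → sub (sub x z) (sub x y) = sub y z

namespace DPoset

variable {X : Type*} [PartialOrder X] (D : DPoset X)

/-- The partial sum of the effect algebra associated with `D`, meaningful when `w ≤ ⊤ ⊖ a`. -/
def add (a w : X) : X :=
  D.sub D.top (D.sub (D.sub D.top a) w)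

lemma compl_compl (a : X) : D.sub D.top (D.sub D.top a) = a :=
  D.sub_sub_cancel (D.le_top a)

lemma compl_le_compl {a b : X} (hab : a ≤ b) : D.sub D.top b ≤ D.sub D.top a :=
  D.sub_antitone hab (D.le_top b)

lemma bot_le (a : X) : D.sub D.top D.top ≤ a := by
  simpa only [D.compl_compl] using D.compl_le_compl (D.le_top (D.sub D.top a))

lemma sub_eq_compl_sub_compl {a b : X} (hab : a ≤ b) :
    D.sub b a = D.sub (D.sub D.top a) (D.sub D.top b) :=
  (D.sub_sub_eq hab (D.le_top b)).symm

lemma sub_le_sub_right {a b c : X} (hab : a ≤ b) (hbc : b ≤ c) : D.sub b a ≤ D.sub c a :=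
  calc D.sub b a = D.sub (D.sub c a) (D.sub c b) := (D.sub_sub_eq hab hbc).symm
    _ ≤ D.sub c a := D.sub_le (D.sub_antitone hab hbc)

lemma le_of_sub_le_sub_left {a b c : X} (ha : a ≤ c) (hb : b ≤ c)
    (h : D.sub c a ≤ D.sub c b) : b ≤ a := by
  simpa only [D.sub_sub_cancel ha, D.sub_sub_cancel hb] using D.sub_antitone h (D.sub_le hb)

lemma sub_le_sub_right_iff {a b c : X} (hab : a ≤ b) (hac : a ≤ c) :
    D.sub b a ≤ D.sub c a ↔ b ≤ c := by
  refine ⟨fun h => ?_, D.sub_le_sub_right hab⟩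
  rw [D.sub_eq_compl_sub_compl hab, D.sub_eq_compl_sub_compl hac] at h
  have hcompl : D.sub D.top c ≤ D.sub D.top b :=
    D.le_of_sub_le_sub_left (D.compl_le_compl hab) (D.compl_le_compl hac) h
  simpa only [D.compl_compl] using D.compl_le_compl hcompl

lemma sub_le_compl {a b : X} (hab : a ≤ b) : D.sub b a ≤ D.sub D.top a :=
  D.sub_le_sub_right hab (D.le_top b)

lemma le_add {a w : X} (hw : w ≤ D.sub D.top a) : a ≤ D.add a w := by
  simpa only [D.compl_compl, add] using D.compl_le_compl (D.sub_le hw)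

lemma add_sub_cancel_left {a w : X} (hw : w ≤ D.sub D.top a) : D.sub (D.add a w) a = w := by
  rw [D.sub_eq_compl_sub_compl (D.le_add hw), add, D.compl_compl, D.sub_sub_cancel hw]

lemma add_sub_cancel {a b : X} (hab : a ≤ b) : D.add a (D.sub b a) = b := by
  rw [add, D.sub_eq_compl_sub_compl hab, D.sub_sub_cancel (D.compl_le_compl hab), D.compl_compl]

lemma add_le_of_le_sub {a b w : X} (hab : a ≤ b) (hw : w ≤ D.sub b a) : D.add a w ≤ b := by
  have hwa : w ≤ D.sub D.top a := hw.trans (D.sub_le_compl hab)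
  rwa [← D.sub_le_sub_right_iff (D.le_add hwa) hab, D.add_sub_cancel_left hwa]

end DPoset

/-- Given a D-poset `X` and `x ≤ y`, the map `z ↦ z ⊖ x` is an order
isomorphism from the interval `[x, y]` to `[⊥, y ⊖ x]` (where `⊥ = ⊤ ⊖ ⊤`),
with inverse `w ↦ ⊤ ⊖ ((⊤ ⊖ x) ⊖ w)`. -/
theorem dposet_interval_orderIso {X : Type*} [PartialOrder X] (D : DPoset X)
    {x y : X} (hxy : x ≤ y) :
    ∃ e : {z : X // x ≤ z ∧ z ≤ y} ≃o
        {w : X // D.sub D.top D.top ≤ w ∧ w ≤ D.sub y x},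
      (∀ z : {z : X // x ≤ z ∧ z ≤ y}, (e z).1 = D.sub z.1 x) ∧
      (∀ w : {w : X // D.sub D.top D.top ≤ w ∧ w ≤ D.sub y x},
        (e.symm w).1 = D.sub D.top (D.sub (D.sub D.top x) w.1)) := by
  have hcompl {w : X} (hw : w ≤ D.sub y x) : w ≤ D.sub D.top x :=
    hw.trans (D.sub_le_compl hxy)
  refine ⟨{
    toFun := fun z => ⟨D.sub z.1 x, D.bot_le _, D.sub_le_sub_right z.2.1 z.2.2⟩
    invFun := fun w => ⟨D.add x w.1, D.le_add (hcompl w.2.2), D.add_le_of_le_sub hxy w.2.2⟩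
    left_inv := fun z => Subtype.ext (D.add_sub_cancel z.2.1)
    right_inv := fun w => Subtype.ext (D.add_sub_cancel_left (hcompl w.2.2))
    map_rel_iff' := fun {a b} => D.sub_le_sub_right_iff a.2.1 b.2.1 }, fun _ => rfl, fun _ => rfl⟩
end

section
/- Given an effect algebra X, there is a (strict) category B(X) whose objects are the elements of X, whose morphisms from x to y are the elements f with f ≤ y ⊖ x when x ≤ y (and no morphisms otherwise), with identity at x given by 0 and composition of f : y → z and g : x → y given by f ⊕ g; i.e., composition is well-defined ((z ⊖ y) ⊖ f exists implies the sum lands in [0, z ⊖ x]), unital (0 ⊕ f = f = f ⊕ 0), and associative. -/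
/-- An effect algebra: a set with `1`, an orthocomplement map `compl`, and a
partial binary operation `⊕` modeled by a total function `add` together with a
definedness predicate `D`. -/
structure EffectAlgebra (X : Type*) where
  one : X
  compl : X → X
  /-- `D a b` means `a ⊕ b` is defined. -/
  D : X → X → Prop
  add : X → X → X
  D_comm : ∀ {a b : X}, D a b → D b a
  add_comm : ∀ {a b : X}, D a b → add a b = add b a
  D_assoc_left : ∀ {a b c : X}, D b c → D a (add b c) → D a b
  D_assoc_right : ∀ {a b c : X}, D b c → D a (add b c) → D (add a b) c
  add_assoc : ∀ {a b c : X}, D b c → D a (add b c) →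
    add a (add b c) = add (add a b) c
  one_max : ∀ {a : X}, D a one → a = compl one
  D_compl : ∀ a : X, D a (compl a)
  add_compl : ∀ a : X, add a (compl a) = one
  eq_compl : ∀ {a b : X}, D a b → add a b = one → b = compl a

/-- The zero element `0 := 1†`. -/
def EffectAlgebra.zero {X : Type*} (E : EffectAlgebra X) : X := E.compl E.one

/-- The induced order: `a ≤ b` iff `a ⊕ c = b` for some `c`. -/
def EffectAlgebra.le {X : Type*} (E : EffectAlgebra X) (a b : X) : Prop :=
  ∃ c, E.D a c ∧ E.add a c = b

open Classical

/-- The induced difference: `b ⊖ a` is the (by cancellation, unique) `c` with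
`a ⊕ c = b`, when `a ≤ b`. -/
noncomputable def EffectAlgebra.sub {X : Type*} (E : EffectAlgebra X) (b a : X) : X :=
  if h : E.le a b then h.choose else a

namespace EffectAlgebra

variable {X : Type*} (E : EffectAlgebra X)

lemma compl_compl (a : X) : E.compl (E.compl a) = a := by
  have h := E.D_comm (E.D_compl a)
  exact (E.eq_compl h (by rw [E.add_comm h, E.add_compl])).symm

lemma cancel {a b c : X} (hab : E.D a b) (hac : E.D a c)
    (h : E.add a b = E.add a c) : b = c := by
  set d := E.compl (E.add a b) with hd
  have hDd : E.D (E.add a b) d := E.D_compl _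
  have hDd' : E.D d (E.add a b) := E.D_comm hDd
  have h1 : E.D d a := E.D_assoc_left hab hDd'
  have h2 : E.D (E.add d a) b := E.D_assoc_right hab hDd'
  have e2 : E.add (E.add d a) b = E.one := by
    rw [← E.add_assoc hab hDd', E.add_comm hDd', E.add_compl]
  have hDd'' : E.D d (E.add a c) := h ▸ hDd'
  have h3 : E.D (E.add d a) c := E.D_assoc_right hac hDd''
  have e3 : E.add (E.add d a) c = E.one := by
    rw [← E.add_assoc hac hDd'', ← h, E.add_comm hDd', E.add_compl]
  rw [E.eq_compl h2 e2, E.eq_compl h3 e3]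

/-- Reverse associativity package. -/
lemma assoc' {a b c : X} (hab : E.D a b) (habc : E.D (E.add a b) c) :
    E.D b c ∧ E.D a (E.add b c) ∧
      E.add a (E.add b c) = E.add (E.add a b) c := by
  have hc : E.D c (E.add a b) := E.D_comm habc
  have hca : E.D c a := E.D_assoc_left hab hc
  have hac : E.D a c := E.D_comm hca
  have hcab : E.D (E.add c a) b := E.D_assoc_right hab hc
  have e1 : E.add c (E.add a b) = E.add (E.add c a) b := E.add_assoc hab hc
  have hb : E.D b (E.add c a) := E.D_comm hcab
  have hb' : E.D b (E.add a c) := by rwa [E.add_comm hca] at hb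
  have hbc : E.D b c := E.D_assoc_left hca hb
  have hbca : E.D (E.add b c) a := E.D_assoc_right hca hb
  have habc' : E.D a (E.add b c) := E.D_comm hbca
  refine ⟨hbc, habc', ?_⟩
  rw [E.add_comm habc', ← E.add_assoc hca hb, E.add_comm hca,
    E.add_assoc hac hb', E.add_comm (E.D_comm hab)]

lemma zero_spec (a : X) : E.D E.zero a ∧ E.add E.zero a = a := by
  -- first prove it for elements of the form `compl b`
  have key : ∀ b : X, E.D E.zero (E.compl b) ∧
      E.add E.zero (E.compl b) = E.compl b := by
    intro b
    have h1 : E.D b (E.compl b) := E.D_compl b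
    have h2 : E.D (E.add b (E.compl b)) E.zero := by
      rw [E.add_compl]; exact E.D_compl E.one
    obtain ⟨hd, hd', he⟩ := E.assoc' h1 h2
    have e1 : E.add b (E.add (E.compl b) E.zero) = E.one := by
      rw [he, E.add_compl]; exact E.add_compl E.one
    have e2 : E.add (E.compl b) E.zero = E.compl b := E.eq_compl hd' e1
    exact ⟨E.D_comm hd, by rw [E.add_comm (E.D_comm hd), e2]⟩
  have := key (E.compl a)
  rwa [E.compl_compl] at this

lemma D_zero (a : X) : E.D E.zero a := (E.zero_spec a).1

lemma zero_add (a : X) : E.add E.zero a = a := (E.zero_spec a).2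

lemma add_zero (a : X) : E.add a E.zero = a := by
  rw [E.add_comm (E.D_comm (E.D_zero a)), E.zero_add]

lemma sub_spec {a b : X} (h : E.le a b) :
    E.D a (E.sub b a) ∧ E.add a (E.sub b a) = b := by
  rw [EffectAlgebra.sub, dif_pos h]; exact h.choose_spec

lemma sub_unique {a b c : X} (hd : E.D a c) (he : E.add a c = b) :
    E.sub b a = c := by
  have h : E.le a b := ⟨c, hd, he⟩
  obtain ⟨hd', he'⟩ := E.sub_spec h
  exact E.cancel hd' hd (he'.trans he.symm)

lemma le_refl (a : X) : E.le a a := ⟨E.zero, E.D_comm (E.D_zero a), E.add_zero a⟩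

lemma le_trans {a b c : X} (h1 : E.le a b) (h2 : E.le b c) : E.le a c := by
  obtain ⟨u, hu, eu⟩ := h1
  obtain ⟨v, hv, ev⟩ := h2
  rw [← eu] at hv ev
  obtain ⟨hd, hd', he⟩ := E.assoc' hu hv
  exact ⟨E.add u v, hd', by rw [he, ev]⟩

lemma le_add_right {a b c : X} (hab : E.D a b) (h : E.le c b) :
    E.D a c ∧ E.le (E.add a c) (E.add a b) := by
  obtain ⟨d, hd, he⟩ := h
  have h1 : E.D a (E.add c d) := he ▸ hab
  refine ⟨E.D_assoc_left hd h1, d, E.D_assoc_right hd h1, ?_⟩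
  rw [← E.add_assoc hd h1, he]

/-- well-definedness of composition: if `D a b`, `f ≤ b`, `g ≤ a`, then
`f ⊕ g` is defined and `≤ a ⊕ b`. -/
lemma comp_le {a b f g : X} (hab : E.D a b) (hf : E.le f b) (hg : E.le g a) :
    E.D f g ∧ E.le (E.add f g) (E.add a b) := by
  obtain ⟨haf, hle1⟩ := E.le_add_right hab hf
  have hfa : E.D f a := E.D_comm haf
  obtain ⟨hfg, hle2⟩ := E.le_add_right hfa hg
  rw [E.add_comm hfa] at hle2
  exact ⟨hfg, E.le_trans hle2 hle1⟩

end EffectAlgebra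

/-- Given an effect algebra `X`, there is a category `B(X)` with objects the
elements of `X`, morphisms `x → y` the elements `f ≤ y ⊖ x` (when `x ≤ y`, and
none otherwise), identity `0` and composition `⊕`.  Explicitly: composition is
well-defined (`f ≤ z ⊖ y` and `g ≤ y ⊖ x` imply `f ⊕ g` is defined and
`f ⊕ g ≤ z ⊖ x`), unital (`0 ⊕ f = f = f ⊕ 0` with `0` a valid identity
morphism, i.e. `0 ≤ x ⊖ x`), and associative. -/
theorem effectAlgebra_category {X : Type*} (E : EffectAlgebra X) :
    -- identities: 0 is a morphism x → x
    (∀ x : X, E.le x x ∧ E.le E.zero (E.sub x x)) ∧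
    -- composition is well-defined
    (∀ x y z f g : X, E.le x y → E.le y z →
      E.le f (E.sub z y) → E.le g (E.sub y x) →
      E.D f g ∧ E.le (E.add f g) (E.sub z x)) ∧
    -- unitality
    (∀ x y f : X, E.le x y → E.le f (E.sub y x) →
      E.add E.zero f = f ∧ E.add f E.zero = f) ∧
    -- associativity
    (∀ w x y z f g h : X, E.le w x → E.le x y → E.le y z →
      E.le f (E.sub z y) → E.le g (E.sub y x) → E.le h (E.sub x w) →
      E.add f (E.add g h) = E.add (E.add f g) h) := by
  have subD : ∀ {x y : X}, E.le x y →
      E.D x (E.sub y x) ∧ E.add x (E.sub y x) = y := fun h => E.sub_spec h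
  -- key fact: if x ≤ y ≤ z then D (sub y x) (sub z y) and
  -- sub z x = sub y x ⊕ sub z y
  have key : ∀ {x y z : X}, E.le x y → E.le y z →
      E.D (E.sub y x) (E.sub z y) ∧
        E.sub z x = E.add (E.sub y x) (E.sub z y) := by
    intro x y z hxy hyz
    obtain ⟨hd1, he1⟩ := E.sub_spec hxy
    obtain ⟨hd2, he2⟩ := E.sub_spec hyz
    have hd2' : E.D (E.add x (E.sub y x)) (E.sub z y) := by rw [he1]; exact hd2
    obtain ⟨hab, hD, he⟩ := E.assoc' hd1 hd2'
    refine ⟨hab, E.sub_unique hD (he.trans ?_)⟩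
    rw [he1]; exact he2
  refine ⟨?_, ?_, ?_, ?_⟩
  · intro x
    have hxx := E.le_refl x
    have : E.sub x x = E.zero :=
      E.sub_unique (E.D_comm (E.D_zero x)) (E.add_zero x)
    rw [this]
    exact ⟨hxx, E.le_refl E.zero⟩
  · intro x y z f g hxy hyz hf hg
    obtain ⟨hab, hsub⟩ := key hxy hyz
    rw [hsub]
    exact E.comp_le hab hf hg
  · intro x y f _ _
    exact ⟨E.zero_add f, E.add_zero f⟩
  · intro w x y z f g h hwx hxy hyz hf hg hh
    obtain ⟨hab, hsub1⟩ := key hwx hxy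
    have hgh := E.comp_le hab hg hh
    have hle_wy : E.le w y := E.le_trans hwx hxy
    obtain ⟨habc, _⟩ := key hle_wy hyz
    rw [hsub1] at habc
    have hDfgh := (E.comp_le habc hf hgh.2).1
    exact E.add_assoc hgh.1 hDfgh
end
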